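/- Let a ∈ ℝ and b ∈ (0,1], and set α = (1+b+ia)/(1+b−ia), β = (1−b+ia)/(1+b+ia), ψ(z) = α(z−β)/(1−β̄z). Then ψ is a holomorphic automorphism of the open unit disc 𝔻, and for every M > 0, the inverse map ψ⁻¹ maps the Stolz-type region {z ∈ 𝔻 : |1−z|² < M(1−|z|²)} into itself. -/

import Mathlib

open Complex Metric Set ComplexConjugate

/-!
The Cayley transform `cayley z = (1 + z) / (1 - z)` maps the disc onto the right half-plane,
with `Re (cayley z) = (1 - ‖z‖²) / ‖1 - z‖²`, so the Stolz-type region of parameter `M` is the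
preimage of the half-plane `Re > 1/M`. Conjugated by the Cayley transform, the disc automorphism
`ψ` becomes the affine map `H ↦ b H - i a`, hence `ψ⁻¹` becomes `H ↦ (H + i a) / b`, which
multiplies real parts by `1 / b ≥ 1` and so maps each half-plane `Re > 1/M` into itself.
-/

noncomputable def mobius (α β z : ℂ) : ℂ := α * (z - β) / (1 - conj β * z)

noncomputable def cayley (z : ℂ) : ℂ := (1 + z) / (1 - z)

def stolzRegion (M : ℝ) : Set ℂ :=
  {z : ℂ | z ∈ ball (0 : ℂ) 1 ∧ ‖1 - z‖ ^ 2 < M * (1 - ‖z‖ ^ 2)}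

theorem one_sub_conj_mul_ne_zero {β z : ℂ} (hβ : ‖β‖ ≤ 1) (hz : ‖z‖ < 1) :
    1 - conj β * z ≠ 0 := by
  have : ‖conj β * z‖ < 1 := by
    rw [norm_mul, norm_conj]
    nlinarith [norm_nonneg β, norm_nonneg z]
  rw [sub_ne_zero]
  rintro h
  simp [← h] at this

theorem sq_norm_one_sub_conj_mul_sub_sq_norm_sub (β z : ℂ) :
    ‖1 - conj β * z‖ ^ 2 - ‖z - β‖ ^ 2 = (1 - ‖β‖ ^ 2) * (1 - ‖z‖ ^ 2) := by
  simp only [Complex.sq_norm, normSq_apply, sub_re, sub_im, mul_re, mul_im, conj_re, conj_im,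
    one_re, one_im]
  ring

theorem norm_mobius_lt_one {α β z : ℂ} (hα : ‖α‖ ≤ 1) (hβ : ‖β‖ < 1) (hz : ‖z‖ < 1) :
    ‖mobius α β z‖ < 1 := by
  have hD := norm_pos_iff.mpr (one_sub_conj_mul_ne_zero hβ.le hz)
  have hlt : ‖z - β‖ < ‖1 - conj β * z‖ := by
    have := sq_norm_one_sub_conj_mul_sub_sq_norm_sub β z
    have : 0 < (1 - ‖β‖ ^ 2) * (1 - ‖z‖ ^ 2) := by
      apply mul_pos <;> nlinarith [norm_nonneg β, norm_nonneg z]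
    exact lt_of_pow_lt_pow_left₀ 2 hD.le (by linarith)
  rw [mobius, norm_div, norm_mul, div_lt_one hD]
  calc ‖α‖ * ‖z - β‖ ≤ ‖z - β‖ := mul_le_of_le_one_left (norm_nonneg _) hα
    _ < _ := hlt

theorem mapsTo_mobius_ball {α β : ℂ} (hα : ‖α‖ ≤ 1) (hβ : ‖β‖ < 1) :
    MapsTo (mobius α β) (ball 0 1) (ball 0 1) := fun z hz => by
  rw [mem_ball_zero_iff] at hz ⊢
  exact norm_mobius_lt_one hα hβ hz

theorem differentiableOn_mobius (α : ℂ) {β : ℂ} (hβ : ‖β‖ ≤ 1) :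
    DifferentiableOn ℂ (mobius α β) (ball 0 1) :=
  DifferentiableOn.div (by fun_prop) (by fun_prop) fun z hz =>
    one_sub_conj_mul_ne_zero hβ (mem_ball_zero_iff.mp hz)

theorem conj_mul_self_of_norm_eq_one {α : ℂ} (hα : ‖α‖ = 1) : conj α * α = 1 := by
  rw [conj_mul', hα]
  norm_num

theorem mobius_inv_mobius {α β z : ℂ} (hα : ‖α‖ = 1) (hβ : ‖β‖ < 1) (hz : ‖z‖ < 1) :
    mobius (conj α) (-(α * β)) (mobius α β z) = z := by
  have hαα := conj_mul_self_of_norm_eq_one hα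
  have hD := one_sub_conj_mul_ne_zero hβ.le hz
  have hββ : 1 - conj β * β ≠ 0 := by
    simpa using one_sub_conj_mul_ne_zero hβ.le hβ
  have hD' : 1 - z * conj β ≠ 0 := by rwa [mul_comm]
  have h1 : mobius α β z + α * β = α * z * (1 - conj β * β) / (1 - conj β * z) := by
    rw [mobius]; field_simp; ring
  have h2 : 1 + conj α * conj β * mobius α β z = (1 - conj β * β) / (1 - conj β * z) := by
    rw [mobius]; field_simp
    linear_combination (conj β * (z - β)) * hαα
  rw [mobius, map_neg, map_mul, sub_neg_eq_add, neg_mul, sub_neg_eq_add, h1, h2]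
  field_simp
  linear_combination z * hαα

theorem mobius_mobius_inv {α β z : ℂ} (hα : ‖α‖ = 1) (hβ : ‖β‖ < 1) (hz : ‖z‖ < 1) :
    mobius α β (mobius (conj α) (-(α * β)) z) = z := by
  have h := mobius_inv_mobius (α := conj α) (β := -(α * β)) (by rwa [norm_conj])
    (by rwa [norm_neg, norm_mul, hα, one_mul]) hz
  rwa [conj_conj, mul_neg, neg_neg, ← mul_assoc, conj_mul_self_of_norm_eq_one hα, one_mul] at h

theorem cayley_div (N D : ℂ) (hD : D ≠ 0) : cayley (N / D) = (D + N) / (D - N) := by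
  rw [cayley, one_add_div hD, one_sub_div hD, div_div_div_cancel_right₀ hD]

theorem re_cayley (z : ℂ) : (cayley z).re = (1 - ‖z‖ ^ 2) / ‖1 - z‖ ^ 2 := by
  rw [cayley, div_re, ← add_div, Complex.sq_norm, Complex.sq_norm]
  congr 1
  simp only [normSq_apply, add_re, add_im, sub_re, sub_im, one_re, one_im]
  ring

theorem re_cayley_nonneg {z : ℂ} (hz : ‖z‖ ≤ 1) : 0 ≤ (cayley z).re := by
  rw [re_cayley]
  have : ‖z‖ ^ 2 ≤ 1 := pow_le_one₀ (norm_nonneg z) hz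
  positivity

theorem mem_stolzRegion_iff {M : ℝ} (hM : 0 < M) {z : ℂ} :
    z ∈ stolzRegion M ↔ ‖z‖ < 1 ∧ M⁻¹ < (cayley z).re := by
  rw [stolzRegion, mem_ofPred_eq, mem_ball_zero_iff]
  refine and_congr_right fun hz => ?_
  have h1 : 0 < ‖1 - z‖ ^ 2 := by
    have : z ≠ 1 := by rintro rfl; simp at hz
    positivity [sub_ne_zero.mpr this.symm]
  rw [re_cayley, lt_div_iff₀ h1, inv_mul_lt_iff₀ hM]

theorem mapsTo_stolzRegion {f : ℂ → ℂ} (hf : MapsTo f (ball 0 1) (ball 0 1))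
    (hre : ∀ z ∈ ball (0 : ℂ) 1, (cayley z).re ≤ (cayley (f z)).re) {M : ℝ} (hM : 0 < M) :
    MapsTo f (stolzRegion M) (stolzRegion M) := by
  intro z hz
  rw [mem_stolzRegion_iff hM] at hz ⊢
  have hz' : z ∈ ball (0 : ℂ) 1 := mem_ball_zero_iff.mpr hz.1
  exact ⟨mem_ball_zero_iff.mp (hf hz'), hz.2.trans_le (hre z hz')⟩

theorem norm_div_conj_self {w : ℂ} (hw : w ≠ 0) : ‖w / conj w‖ = 1 := by
  rw [norm_div, norm_conj, div_self (norm_ne_zero_iff.mpr hw)]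

section

variable (a : ℝ) {b : ℝ}

theorem conj_one_add_ofReal_add_I_mul : conj (1 + (b : ℂ) + I * a) = 1 + b - I * a := by
  simp [conj_ofReal, sub_eq_add_neg]

theorem one_add_ofReal_add_I_mul_ne_zero (hb : 0 < b) : 1 + (b : ℂ) + I * a ≠ 0 := by
  intro h
  have := congrArg re h
  simp only [add_re, one_re, ofReal_re, mul_re, I_re, zero_mul, I_im, ofReal_im, mul_zero,
    sub_self, add_zero, zero_re] at this
  linarith

theorem norm_one_sub_ofReal_add_I_mul_div_lt_one (hb : 0 < b) :
    ‖(1 - (b : ℂ) + I * a) / (1 + b + I * a)‖ < 1 := by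
  rw [norm_div, div_lt_one (norm_pos_iff.mpr (one_add_ofReal_add_I_mul_ne_zero a hb))]
  refine lt_of_pow_lt_pow_left₀ 2 (norm_nonneg _) ?_
  simp only [Complex.sq_norm, normSq_apply, add_re, sub_re, one_re, ofReal_re, mul_re, I_re,
    I_im, ofReal_im, add_im, sub_im, one_im, mul_im]
  nlinarith

theorem cayley_mobius (hb : 0 < b) {z : ℂ} (hz : ‖z‖ < 1) :
    cayley (mobius ((1 + b + I * a) / (1 + b - I * a)) ((1 - b + I * a) / (1 + b + I * a)) z)
      = b * cayley z - I * a := by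
  have hp := one_add_ofReal_add_I_mul_ne_zero a hb
  have hq : 1 + (b : ℂ) - I * a ≠ 0 := by
    rwa [← conj_one_add_ofReal_add_I_mul, map_ne_zero]
  have hD := one_sub_conj_mul_ne_zero (norm_one_sub_ofReal_add_I_mul_div_lt_one a hb).le hz
  have hconj :
      conj ((1 - (b : ℂ) + I * a) / (1 + b + I * a)) = (1 - b - I * a) / (1 + b - I * a) := by
    simp [conj_ofReal, sub_eq_add_neg]
  rw [hconj] at hD
  have hDn : 1 + (b : ℂ) - I * a - (1 - b - I * a) * z ≠ 0 := by
    convert mul_ne_zero hq hD using 1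
    field_simp
  have hψ : mobius ((1 + b + I * a) / (1 + b - I * a)) ((1 - b + I * a) / (1 + b + I * a)) z
      = ((1 + b + I * a) * z - (1 - b + I * a)) / (1 + b - I * a - (1 - b - I * a) * z) := by
    rw [mobius, hconj]
    field_simp
  have h1z : 1 - z ≠ 0 := by
    rw [sub_ne_zero]; rintro rfl; simp at hz
  have hnum : 1 + (b : ℂ) - I * a - (1 - b - I * a) * z + ((1 + b + I * a) * z - (1 - b + I * a))
      = 2 * (b * (1 + z) - I * a * (1 - z)) := by ring
  have hden : 1 + (b : ℂ) - I * a - (1 - b - I * a) * z - ((1 + b + I * a) * z - (1 - b + I * a))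
      = 2 * (1 - z) := by ring
  rw [hψ, cayley_div _ _ hDn, hnum, hden, mul_div_mul_left _ _ two_ne_zero, sub_div,
    mul_div_assoc, mul_div_cancel_right₀ _ h1z, cayley]

end

/-- For `a ∈ ℝ`, `b ∈ (0,1]`, the Möbius map `ψ(z) = α(z-β)/(1-β̄z)` with
`α = (1+b+ia)/(1+b-ia)`, `β = (1-b+ia)/(1+b+ia)` is a holomorphic automorphism of the unit
disc whose inverse maps every Stolz-type region `{z : |1-z|² < M(1-|z|²)}` into itself. -/
theorem stmt_15 (a b : ℝ) (hb0 : 0 < b) (hb1 : b ≤ 1) (α β : ℂ) (ψ : ℂ → ℂ)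
    (hα : α = (1 + (b : ℂ) + Complex.I * (a : ℂ)) / (1 + (b : ℂ) - Complex.I * (a : ℂ)))
    (hβ : β = (1 - (b : ℂ) + Complex.I * (a : ℂ)) / (1 + (b : ℂ) + Complex.I * (a : ℂ)))
    (hψ : ∀ z, ψ z = α * (z - β) / (1 - (starRingEnd ℂ) β * z)) :
    DifferentiableOn ℂ ψ (ball (0 : ℂ) 1) ∧
    MapsTo ψ (ball (0 : ℂ) 1) (ball (0 : ℂ) 1) ∧
    ∃ φ : ℂ → ℂ,
      DifferentiableOn ℂ φ (ball (0 : ℂ) 1) ∧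
      MapsTo φ (ball (0 : ℂ) 1) (ball (0 : ℂ) 1) ∧
      (∀ z ∈ ball (0 : ℂ) 1, φ (ψ z) = z ∧ ψ (φ z) = z) ∧
      ∀ M : ℝ, 0 < M →
        MapsTo φ
          {z : ℂ | z ∈ ball (0 : ℂ) 1 ∧
            ‖1 - z‖ ^ 2 < M * (1 - ‖z‖ ^ 2)}
          {z : ℂ | z ∈ ball (0 : ℂ) 1 ∧
            ‖1 - z‖ ^ 2 < M * (1 - ‖z‖ ^ 2)} := by
  obtain rfl : ψ = mobius α β := funext hψ
  have hαn : ‖α‖ = 1 := by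
    rw [hα, ← conj_one_add_ofReal_add_I_mul]
    exact norm_div_conj_self (one_add_ofReal_add_I_mul_ne_zero a hb0)
  have hβn : ‖β‖ < 1 := hβ ▸ norm_one_sub_ofReal_add_I_mul_div_lt_one a hb0
  have hβ'n : ‖-(α * β)‖ < 1 := by rwa [norm_neg, norm_mul, hαn, one_mul]
  set φ := mobius (conj α) (-(α * β))
  have hφ : MapsTo φ (ball 0 1) (ball 0 1) := mapsTo_mobius_ball (by rw [norm_conj, hαn]) hβ'n
  have hre : ∀ w ∈ ball (0 : ℂ) 1, (cayley w).re ≤ (cayley (φ w)).re := by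
    intro w hw
    have hφw := mem_ball_zero_iff.mp (hφ hw)
    have h := cayley_mobius a hb0 hφw
    rw [← hα, ← hβ, mobius_mobius_inv hαn hβn (mem_ball_zero_iff.mp hw)] at h
    have hre_eq : (cayley w).re = b * (cayley (φ w)).re := by simp [h]
    nlinarith [re_cayley_nonneg hφw.le]
  refine ⟨differentiableOn_mobius α hβn.le, mapsTo_mobius_ball hαn.le hβn, φ,
    differentiableOn_mobius _ hβ'n.le, hφ, fun z hz => ?_, fun M hM => mapsTo_stolzRegion hφ hre hM⟩
  rw [mem_ball_zero_iff] at hz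
  exact ⟨mobius_inv_mobius hαn hβn hz, mobius_mobius_inv hαn hβn hz⟩
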